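/- (Gale's evenness criterion) Let x₁,…,xₙ ∈ ℝᵈ be such that all (d+1)×(d+1) minors of the matrix with columns (1,x_i) have the same sign. Then for an index set I = {i₁,…,i_d} ⊆ {1,…,n}, the set {x_i : i ∈ I} is the vertex set of a facet of conv(x₁,…,xₙ) if and only if the parity of #{i ∈ I : i > j} is the same for all j ∈ {1,…,n} ∖ I. -/

import Mathlib

/-!
Write `I = {σ₀ < ⋯ < σ_{d-1}}` and `G y = det [(1, y) | (1, x_{σ₀}) | ⋯ | (1, x_{σ_{d-1}})]`.
`G` is affine and vanishes on `x_I`, and by Cramer's rule every affine function vanishing on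
`x_I` is a multiple of `G`. Hence `conv x_I` is a face exactly when `G` has constant sign on the
points `x_j`, `j ∉ I`, and `G (x_j) ≠ 0` makes the points `x_I` affinely independent, so that face
is a facet. Sorting the columns of `G (x_j)` is a cyclic shift past the `#{i ∈ I | i < j}`
columns before `j`, so `sign G (x_j) = (-1) ^ #{i ∈ I | i < j} · ε`; finally
`#{i ∈ I | i < j} + #{i ∈ I | j < i} = d`.
-/

noncomputable section

/-- The `(d+1)×(d+1)` matrix whose `j`-th column is `(1, cols j)`. -/
def liftMat {d : ℕ} (cols : Fin (d + 1) → Fin d → ℝ) : Matrix (Fin (d + 1)) (Fin (d + 1)) ℝ :=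
  Matrix.of fun i j => Fin.cases (motive := fun _ => ℝ) 1 (fun r => cols j r) i

/-- The `(d+1) × n` matrix with columns `(1, x i)` is positive: all maximal minors
(columns taken in increasing order) are positive. -/
def PosMat {d n : ℕ} (x : Fin n → Fin d → ℝ) : Prop :=
  ∀ S : Fin (d + 1) → Fin n, StrictMono S → 0 < (liftMat fun k => x (S k)).det

/-- `F` is a face of `P`: the set of maximizers in `P` of some linear functional. -/
def IsFace {d : ℕ} (P F : Set (Fin d → ℝ)) : Prop :=
  ∃ f : (Fin d → ℝ) →ₗ[ℝ] ℝ, ∃ c : ℝ,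
    (∀ y ∈ P, f y ≤ c) ∧ F = {y ∈ P | f y = c}

/-- `F` is a facet of the `d`-dimensional polytope `P`: a face of dimension `d − 1`. -/
def IsFacet {d : ℕ} (P F : Set (Fin d → ℝ)) : Prop :=
  IsFace P F ∧ Module.finrank ℝ (vectorSpan ℝ F) = d - 1

open Finset Matrix

theorem neg_one_pow_eq_neg_one_pow_iff (a b : ℕ) : (-1 : ℝ) ^ a = (-1) ^ b ↔ a % 2 = b % 2 := by
  rw [neg_one_pow_eq_pow_mod_two, neg_one_pow_eq_pow_mod_two (n := b)]
  rcases Nat.mod_two_eq_zero_or_one a with ha | ha <;>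
    rcases Nat.mod_two_eq_zero_or_one b with hb | hb <;> norm_num [ha, hb]

theorem Real.sign_neg_one_pow_mul (k : ℕ) (r : ℝ) :
    Real.sign ((-1) ^ k * r) = (-1) ^ k * Real.sign r := by
  rcases neg_one_pow_eq_or ℝ k with h | h <;> simp [h, Real.sign_neg]

theorem Finset.card_filter_lt_add_card_filter_gt {α : Type*} [LinearOrder α] {s : Finset α} {a : α}
    (ha : a ∉ s) : #(s.filter (· < a)) + #(s.filter (a < ·)) = #s := by
  have hgt : s.filter (a < ·) = s.filter fun b => ¬b < a := filter_congr fun b hb => by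
    rw [not_lt]
    exact ⟨le_of_lt, fun h => lt_of_le_of_ne h (ne_of_mem_of_not_mem hb ha).symm⟩
  rw [hgt, card_filter_add_card_filter_not]

theorem StrictMono.apply_lt_iff_lt_card_filter {α : Type*} [LinearOrder α] {k : ℕ}
    {f : Fin k → α} (hf : StrictMono f) (i : Fin k) (a : α) :
    f i < a ↔ (i : ℕ) < #{l | f l < a} := by
  constructor
  · intro h
    have hsub : Iic i ⊆ ({l | f l < a} : Finset (Fin k)) := fun l hl =>
      mem_filter.2 ⟨mem_univ _, (hf.monotone (mem_Iic.1 hl)).trans_lt h⟩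
    have := card_le_card hsub
    rw [Fin.card_Iic] at this
    omega
  · intro h
    by_contra! h'
    have hsub : ({l | f l < a} : Finset (Fin k)) ⊆ Iio i := fun l hl =>
      mem_Iio.2 (hf.lt_iff_lt.1 ((mem_filter.1 hl).2.trans_le h'))
    have := card_le_card hsub
    rw [Fin.card_Iio] at this
    omega

theorem Finset.orderEmbOfFin_lt_iff {α : Type*} [LinearOrder α] (s : Finset α) {k : ℕ}
    (h : #s = k) (i : Fin k) (a : α) :
    s.orderEmbOfFin h i < a ↔ (i : ℕ) < #(s.filter (· < a)) := by
  conv_rhs => rw [← s.map_orderEmbOfFin_univ h, filter_map, card_map]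
  exact (s.orderEmbOfFin h).strictMono.apply_lt_iff_lt_card_filter i a

theorem Real.sign_eq_sign_of_mul_eq_mul {a b u v : ℝ} (h : a * u = b * v) (hu : u < 0)
    (hv : v < 0) : Real.sign a = Real.sign b := by
  rcases lt_trichotomy a 0 with ha | rfl | ha <;> rcases lt_trichotomy b 0 with hb | rfl | hb <;>
    simp only [Real.sign_of_neg, Real.sign_of_pos, Real.sign_zero, *] <;> nlinarith

theorem AffineIndependent.finrank_vectorSpan_convexHull {𝕜 E ι : Type*} [Field 𝕜] [LinearOrder 𝕜]
    [IsStrictOrderedRing 𝕜] [AddCommGroup E] [Module 𝕜 E] [Fintype ι] {p : ι → E}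
    (hp : AffineIndependent 𝕜 p) :
    Module.finrank 𝕜 (vectorSpan 𝕜 (convexHull 𝕜 (Set.range p))) = Fintype.card ι - 1 := by
  rw [← direction_affineSpan, affineSpan_convexHull, direction_affineSpan]
  cases isEmpty_or_nonempty ι
  · rw [Set.range_eq_empty, vectorSpan_empty, finrank_bot, Fintype.card_eq_zero]
  · rw [← hp.finrank_vectorSpan_add_one, Nat.add_sub_cancel]

section Cramer

variable {K m : Type*} [CommRing K] [Fintype m] [DecidableEq m]

theorem Matrix.det_mul_apply_eq_det_updateCol_mul (A : Matrix m m K) (φ : (m → K) →ₗ[K] K)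
    {i : m} (hφ : ∀ q ≠ i, φ (Aᵀ q) = 0) (u : m → K) :
    A.det * φ u = (A.updateCol i u).det * φ (Aᵀ i) := by
  have h := congrArg φ (mulVec_cramer A u)
  simp only [mulVec_eq_sum, op_smul_eq_smul, map_sum, map_smul, smul_eq_mul] at h
  rw [← h, Finset.sum_eq_single i (fun q _ hq => by rw [hφ q hq, mul_zero]) (by simp),
    cramer_apply]

end Cramer

def liftAffine (K : Type*) [CommRing K] (d : ℕ) : (Fin d → K) →ᵃ[K] (Fin (d + 1) → K) where
  toFun y := Fin.cons 1 y
  linear := LinearMap.vecCons 0 LinearMap.id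
  map_vadd' y v := by
    ext i
    cases i using Fin.cases <;> simp [vadd_eq_add]

theorem liftAffine_apply {K : Type*} [CommRing K] {d : ℕ} (y : Fin d → K) :
    liftAffine K d y = Fin.cons 1 y :=
  rfl

section AffineDet

variable {d : ℕ}

theorem liftMat_transpose_apply (cols : Fin (d + 1) → Fin d → ℝ) (j : Fin (d + 1)) :
    (liftMat cols)ᵀ j = liftAffine ℝ d (cols j) := by
  ext i
  cases i using Fin.cases <;> rfl

theorem updateCol_liftMat_cons_zero (z y : Fin d → ℝ) (b : Fin d → Fin d → ℝ) :
    (liftMat (Fin.cons z b)).updateCol 0 (liftAffine ℝ d y) = liftMat (Fin.cons y b) := by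
  ext i j
  cases j using Fin.cases
  · cases i using Fin.cases <;> simp [liftMat, liftAffine_apply]
  · simp [liftMat]

/-- `y ↦ det [(1, y) | (1, b 0) | ⋯]`, made visibly affine by Cramer's rule
`cramer A u 0 = det (A.updateCol 0 u)`; the `0`-th column of `A` plays no role. -/
def affineDet (b : Fin d → Fin d → ℝ) : (Fin d → ℝ) →ᵃ[ℝ] ℝ :=
  ((LinearMap.proj 0).comp (cramer (liftMat (Fin.cons 0 b)))).toAffineMap.comp (liftAffine ℝ d)

theorem affineDet_apply (b : Fin d → Fin d → ℝ) (y : Fin d → ℝ) :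
    affineDet b y = (liftMat (Fin.cons y b)).det := by
  simp only [affineDet, AffineMap.comp_apply, LinearMap.coe_toAffineMap, LinearMap.comp_apply,
    LinearMap.proj_apply, cramer_apply, updateCol_liftMat_cons_zero]

theorem affineDet_apply_self (b : Fin d → Fin d → ℝ) (k : Fin d) : affineDet b (b k) = 0 := by
  rw [affineDet_apply]
  refine det_zero_of_column_eq (Fin.succ_ne_zero k).symm fun i => ?_
  cases i using Fin.cases <;> rfl

theorem affineDet_mul_sub_eq (b : Fin d → Fin d → ℝ) {f : (Fin d → ℝ) →ₗ[ℝ] ℝ} {c : ℝ}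
    (hf : ∀ k, f (b k) = c) (y z : Fin d → ℝ) :
    affineDet b z * (f y - c) = affineDet b y * (f z - c) := by
  let φ : (Fin (d + 1) → ℝ) →ₗ[ℝ] ℝ := f ∘ₗ LinearMap.funLeft ℝ ℝ Fin.succ - c • LinearMap.proj 0
  have hφ (w : Fin d → ℝ) : φ (liftAffine ℝ d w) = f w - c := by
    simp [φ, liftAffine_apply, LinearMap.funLeft]
  have key := (liftMat (Fin.cons z b)).det_mul_apply_eq_det_updateCol_mul φ (i := 0) (fun q hq => by
    obtain ⟨k, rfl⟩ := Fin.exists_succ_eq.2 hq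
    rw [liftMat_transpose_apply, Fin.cons_succ, hφ, hf, sub_self]) (liftAffine ℝ d y)
  rwa [updateCol_liftMat_cons_zero, liftMat_transpose_apply, Fin.cons_zero, hφ, hφ,
    ← affineDet_apply, ← affineDet_apply] at key

theorem affineIndependent_of_affineDet_ne_zero {b : Fin d → Fin d → ℝ} {z : Fin d → ℝ}
    (hz : affineDet b z ≠ 0) : AffineIndependent ℝ b := by
  rw [affineDet_apply, ← det_transpose] at hz
  have hcols : liftAffine ℝ d ∘ b = fun k => (liftMat (Fin.cons z b))ᵀ k.succ :=
    funext fun k => by rw [Function.comp_apply, liftMat_transpose_apply, Fin.cons_succ]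
  refine AffineIndependent.of_comp (liftAffine ℝ d) (LinearIndependent.affineIndependent ℝ ?_)
  rw [hcols]
  exact (linearIndependent_rows_of_det_ne_zero hz).comp Fin.succ (Fin.succ_injective d)

end AffineDet

section Polytope

variable {ι : Type*} {d : ℕ}

theorem isFace_convexHull_image (x : ι → Fin d → ℝ) (I : Set ι) (g : (Fin d → ℝ) →ᵃ[ℝ] ℝ)
    (hI : ∀ i ∈ I, g (x i) = 0) (hIc : ∀ i ∉ I, g (x i) < 0) :
    IsFace (convexHull ℝ (Set.range x)) (convexHull ℝ (x '' I)) := by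
  have hg (y : Fin d → ℝ) : g y = g.linear y + g 0 := congrFun g.decomp y
  have hzero : convexHull ℝ (x '' I) ⊆ g ⁻¹' {0} :=
    convexHull_min (by rintro _ ⟨i, hi, rfl⟩; exact hI i hi)
      ((convex_singleton 0).affine_preimage g)
  have hneg : convexHull ℝ (x '' Iᶜ) ⊆ g ⁻¹' Set.Iio 0 :=
    convexHull_min (by rintro _ ⟨i, hi, rfl⟩; exact hIc i hi) ((convex_Iio 0).affine_preimage g)
  have hnonpos : convexHull ℝ (Set.range x) ⊆ g ⁻¹' Set.Iic 0 := by
    refine convexHull_min ?_ ((convex_Iic 0).affine_preimage g)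
    rintro _ ⟨i, rfl⟩
    by_cases hi : i ∈ I
    exacts [(hI i hi).le, (hIc i hi).le]
  refine ⟨g.linear, -g 0, fun y hy => ?_, ?_⟩
  · have := hnonpos hy
    rw [Set.mem_preimage, Set.mem_Iic, hg] at this
    linarith
  ext y
  have hlin : g.linear y = -g 0 ↔ g y = 0 := by
    rw [hg y]
    constructor <;> intro <;> linarith
  rw [Set.mem_sep_iff, hlin]
  refine ⟨fun hy => ⟨convexHull_mono (Set.image_subset_range _ _) hy, hzero hy⟩, ?_⟩
  rintro ⟨hyP, hy0⟩
  rw [← Set.image_union_image_compl_eq_range] at hyP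
  rcases (x '' I).eq_empty_or_nonempty with hA | hA
  · rw [hA, Set.empty_union] at hyP
    exact absurd hy0 (hneg hyP).ne
  rcases (x '' Iᶜ).eq_empty_or_nonempty with hB | hB
  · rwa [hB, Set.union_empty] at hyP
  rw [convexHull_union hA hB] at hyP
  obtain ⟨a, ha, b, hb, s, t, -, -, hst, rfl⟩ := mem_convexJoin.1 hyP
  have ht : t * g b = 0 := by
    rw [Convex.combo_affine_apply hst, hzero ha] at hy0
    simpa using hy0
  obtain rfl : t = 0 := (mul_eq_zero.1 ht).resolve_right (hneg hb).ne
  rw [add_zero] at hst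
  rwa [hst, one_smul, zero_smul, add_zero]

theorem isFacet_iff_sign_affineDet_eq (x : ι → Fin d → ℝ) (I : Set ι) (b : Fin d → Fin d → ℝ)
    (hb : Set.range b = x '' I) (hne : ∀ j ∉ I, affineDet b (x j) ≠ 0) {j₀ : ι} (hj₀ : j₀ ∉ I) :
    IsFacet (convexHull ℝ (Set.range x)) (convexHull ℝ (x '' I)) ↔
      ∀ j ∉ I, ∀ j' ∉ I, Real.sign (affineDet b (x j)) = Real.sign (affineDet b (x j')) := by
  have hzero : convexHull ℝ (x '' I) ⊆ affineDet b ⁻¹' {0} := by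
    refine convexHull_min ?_ ((convex_singleton 0).affine_preimage _)
    rw [← hb]
    rintro _ ⟨k, rfl⟩
    exact affineDet_apply_self b k
  have hdim : Module.finrank ℝ (vectorSpan ℝ (convexHull ℝ (x '' I))) = d - 1 := by
    rw [← hb, (affineIndependent_of_affineDet_ne_zero (hne j₀ hj₀)).finrank_vectorSpan_convexHull,
      Fintype.card_fin]
  rw [IsFacet, and_iff_left hdim]
  constructor
  · rintro ⟨f, c, hle, hF⟩ j hj j' hj'
    have hmem (i : ι) : x i ∈ convexHull ℝ (Set.range x) := subset_convexHull ℝ _ ⟨i, rfl⟩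
    have hfb (k : Fin d) : f (b k) = c := by
      have : b k ∈ convexHull ℝ (x '' I) := subset_convexHull ℝ _ (hb ▸ ⟨k, rfl⟩)
      rw [hF] at this
      exact this.2
    have hlt (i : ι) (hi : i ∉ I) : f (x i) - c < 0 := by
      refine sub_neg.2 ((hle _ (hmem i)).lt_of_ne fun h => hne i hi (hzero ?_))
      rw [hF]
      exact ⟨hmem i, h⟩
    exact (Real.sign_eq_sign_of_mul_eq_mul (affineDet_mul_sub_eq b hfb _ _) (hlt j hj)
      (hlt j' hj')).symm
  · intro hsign
    refine isFace_convexHull_image x I (-Real.sign (affineDet b (x j₀)) • affineDet b)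
      (fun i hi => ?_) fun j hj => ?_
    · rw [AffineMap.coe_smul, Pi.smul_apply, hzero (subset_convexHull ℝ _ ⟨i, hi, rfl⟩), smul_zero]
    · rw [AffineMap.coe_smul, Pi.smul_apply, smul_eq_mul, neg_mul, neg_lt_zero, ← hsign j hj j₀ hj₀]
      exact Real.sign_mul_pos_of_ne_zero _ (hne j hj)

end Polytope

theorem sign_affineDet_orderEmbOfFin {d n : ℕ} {x : Fin n → Fin d → ℝ} {ε : ℝ}
    (hminor : ∀ S : Fin (d + 1) → Fin n, StrictMono S →
      Real.sign (liftMat fun k => x (S k)).det = ε)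
    {I : Finset (Fin n)} (hI : #I = d) {j : Fin n} (hj : j ∉ I) :
    Real.sign (affineDet (x ∘ I.orderEmbOfFin hI) (x j)) = (-1) ^ #(I.filter (· < j)) * ε := by
  set σ := I.orderEmbOfFin hI
  set p : Fin (d + 1) := ⟨#(I.filter (· < j)), Nat.lt_succ_of_le (hI ▸ card_filter_le _ _)⟩
  -- `p.insertNth j σ` lists `insert j I` increasingly, and it is `Fin.cons j σ ∘ p.cycleRange`.
  have hmono : StrictMono (p.insertNth j σ) := by
    refine (Fin.strictMono_insertNth_iff p j σ).2 ⟨σ.strictMono, fun k hk => ?_, fun k hk => ?_⟩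
    · exact (I.orderEmbOfFin_lt_iff hI k j).2 hk
    · refine lt_of_le_of_ne (not_lt.1 fun h => ?_) fun h => hj (h ▸ I.orderEmbOfFin_mem hI k)
      exact (I.orderEmbOfFin_lt_iff hI k j).1 h |>.not_ge hk
  have h := hminor _ hmono
  rw [← Fin.cons_comp_cycleRange] at h
  change Real.sign ((liftMat fun k => x ((Fin.cons j σ : Fin (d + 1) → Fin n) k)).submatrix id
    p.cycleRange).det = ε at h
  rw [det_permute', Fin.sign_cycleRange] at h
  push_cast at h
  rw [Real.sign_neg_one_pow_mul, show (fun k => x ((Fin.cons j σ : Fin (d + 1) → Fin n) k)) =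
    Fin.cons (x j) (x ∘ σ) from Fin.comp_cons x j σ, ← affineDet_apply] at h
  rw [← h, ← mul_assoc, ← mul_pow, neg_one_mul, neg_neg, one_pow, one_mul]

theorem gale_evenness {d n : ℕ} (hn : d + 1 ≤ n) (x : Fin n → Fin d → ℝ)
    (ε : ℝ) (hε : ε = 1 ∨ ε = -1)
    (hminor : ∀ S : Fin (d + 1) → Fin n, StrictMono S →
      Real.sign (liftMat fun k => x (S k)).det = ε)
    (I : Finset (Fin n)) (hI : I.card = d) :
    IsFacet (convexHull ℝ (Set.range x)) (convexHull ℝ (x '' I)) ↔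
      ∀ j ∉ I, ∀ j' ∉ I,
        (I.filter fun i => j < i).card % 2 = (I.filter fun i => j' < i).card % 2 := by
  set b := x ∘ I.orderEmbOfFin hI
  have hsign (j : Fin n) (hj : j ∉ I) := sign_affineDet_orderEmbOfFin hminor hI hj
  have hε0 : ε ≠ 0 := by rcases hε with rfl | rfl <;> norm_num
  have hne (j : Fin n) (hj : j ∉ I) : affineDet b (x j) ≠ 0 := fun h0 => by
    have := hsign j hj
    rw [h0, Real.sign_zero] at this
    exact mul_ne_zero (pow_ne_zero _ (by norm_num)) hε0 this.symm
  obtain ⟨j₀, -, hj₀⟩ := exists_mem_notMem_of_card_lt_card (s := I) (t := univ)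
    (by rw [card_univ, Fintype.card_fin, hI]; omega)
  rw [isFacet_iff_sign_affineDet_eq x I b (by rw [Set.range_comp, I.range_orderEmbOfFin]) hne hj₀]
  refine forall₂_congr fun j hj => forall₂_congr fun j' hj' => ?_
  rw [hsign j hj, hsign j' hj', mul_left_inj' hε0, neg_one_pow_eq_neg_one_pow_iff]
  have := card_filter_lt_add_card_filter_gt hj
  have := card_filter_lt_add_card_filter_gt hj'
  omega
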